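/- arXiv:2005.07253 — 6 statements merged into one kernel-verified Lean document; each statement's English description precedes it below -/
import Mathlib

section
/- Let u : ℕ → ℝ be strictly decreasing with u(0) > 0 and u(k) → −∞ as k → ∞. Then the function g(x) = Σ_{k=0}^∞ x^k u(k), defined for x ∈ [0,1), has a unique root Λ̄ ∈ (0,1): g is positive on [0,Λ̄), zero at Λ̄, and negative on (Λ̄,1). (In particular g(0) = u(0) > 0 and g(x) → −∞ as x → 1⁻.) -/
/-!
Multiplying by `1 - x` turns `g x = ∑ xᵏ u(k)` into
`H x = u(0) + ∑ xᵏ⁺¹ (u(k+1) - u(k))`, whose non-constant coefficients are negative, so `H`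
is strictly decreasing on `[0,1)` with `H 0 = u(0) > 0`. The partial sums of `H` at `x = 1`
telescope to `u(N)`, which is eventually negative, so `H < 0` near `1`. As `1 - x > 0`, `g` has
the sign of `H`, and the intermediate value theorem places the unique sign change.
-/

open Filter Set Topology

theorem existsUnique_sign_change {f : ℝ → ℝ} {a b : ℝ} (hf : ContinuousOn f (Ico a b))
    (ha : 0 < f a) (hneg : ∃ x ∈ Ico a b, f x < 0)
    (hsign : ∀ x y, a ≤ x → x < y → y < b → f x ≤ 0 → f y < 0) :
    ∃! c : ℝ, c ∈ Ioo a b ∧ f c = 0 ∧ (∀ x, a ≤ x → x < c → 0 < f x) ∧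
      (∀ x, c < x → x < b → f x < 0) := by
  obtain ⟨x₁, ⟨hax₁, hx₁b⟩, hfx₁⟩ := hneg
  obtain ⟨c, ⟨hac, hcx₁⟩, hfc⟩ : ∃ c ∈ Icc a x₁, f c = 0 :=
    intermediate_value_Icc' hax₁ (hf.mono (Icc_subset_Ico_right hx₁b)) ⟨hfx₁.le, ha.le⟩
  have hac : a < c := hac.lt_of_ne (by rintro rfl; linarith)
  have hcb : c < b := hcx₁.trans_lt hx₁b
  have hpos : ∀ x, a ≤ x → x < c → 0 < f x := fun x hax hxc =>
    not_le.mp fun hfx => (hsign x c hax hxc hcb hfx).ne hfc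
  have hneg : ∀ x, c < x → x < b → f x < 0 := fun x hcx hxb =>
    hsign c x hac.le hcx hxb hfc.le
  refine ⟨c, ⟨⟨hac, hcb⟩, hfc, hpos, hneg⟩, ?_⟩
  rintro d ⟨⟨had, hdb⟩, hfd, -, -⟩
  rcases lt_trichotomy d c with h | h | h
  · exact absurd hfd (hpos d had.le h).ne'
  · exact h
  · exact absurd hfd (hneg d h hdb).ne

theorem continuousOn_tsum_pow_mul {a : ℕ → ℝ}
    (ha : ∀ r : ℝ, 0 ≤ r → r < 1 → Summable fun k => r ^ k * a k) :
    ContinuousOn (fun x => ∑' k, x ^ k * a k) (Ioo (-1) 1) := by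
  intro x hx
  obtain ⟨r, hxr, hr1⟩ : ∃ r, |x| < r ∧ r < 1 := exists_between (abs_lt.mpr hx)
  have hr0 : 0 ≤ r := (abs_nonneg x).trans hxr.le
  have hcont : ContinuousOn (fun x => ∑' k, x ^ k * a k) (Icc (-r) r) := by
    refine continuousOn_tsum (fun k => by fun_prop) (ha r hr0 hr1).abs fun k y hy => ?_
    rw [Real.norm_eq_abs, abs_mul, abs_mul, abs_pow, abs_pow, abs_of_nonneg hr0]
    gcongr
    exact abs_le.mpr hy
  have hnhds : Icc (-r) r ∈ 𝓝 x := Icc_mem_nhds (neg_lt_of_abs_lt hxr) (lt_of_abs_lt hxr)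
  exact (hcont.continuousAt hnhds).continuousWithinAt

/-- The generating function of the backward differences of `u` (with `u (-1) = 0`). -/
noncomputable def diffSeries (u : ℕ → ℝ) (x : ℝ) : ℝ :=
  u 0 + ∑' k, x ^ (k + 1) * (u (k + 1) - u k)

section diffSeries

variable {u : ℕ → ℝ} {x : ℝ}

theorem summable_pow_succ_mul_sub (h : Summable fun k => x ^ k * u k) :
    Summable fun k => x ^ (k + 1) * (u (k + 1) - u k) :=
  (((summable_nat_add_iff 1).mpr h).sub (h.mul_left x)).congr fun k => by ring

theorem one_sub_mul_tsum_pow_mul (h : Summable fun k => x ^ k * u k) :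
    (1 - x) * ∑' k, x ^ k * u k = diffSeries u x := by
  have h₁ : Summable fun k => x ^ (k + 1) * u (k + 1) := (summable_nat_add_iff 1).mpr h
  have h₂ : Summable fun k => x ^ (k + 1) * u k := (h.mul_left x).congr fun k => by ring
  have hshift : ∑' k, x ^ k * u k = u 0 + ∑' k, x ^ (k + 1) * u (k + 1) := by
    simpa using h.tsum_eq_zero_add
  have hmul : x * ∑' k, x ^ k * u k = ∑' k, x ^ (k + 1) * u k := by
    rw [← tsum_mul_left]
    exact tsum_congr fun k => by ring
  have hdiff : ∑' k, x ^ (k + 1) * (u (k + 1) - u k) =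
      ∑' k, x ^ (k + 1) * u (k + 1) - ∑' k, x ^ (k + 1) * u k := by
    rw [← h₁.tsum_sub h₂]
    exact tsum_congr fun k => by ring
  rw [diffSeries, hdiff, sub_mul, one_mul, hmul]
  linarith

theorem diffSeries_lt_diffSeries (hu : StrictAnti u) {y : ℝ} (hx : 0 ≤ x) (hxy : x < y)
    (hsx : Summable fun k => x ^ k * u k) (hsy : Summable fun k => y ^ k * u k) :
    diffSeries u y < diffSeries u x := by
  have hd : ∀ k, u (k + 1) - u k < 0 := fun k => sub_neg.mpr (hu k.lt_succ_self)
  refine add_lt_add_right (Summable.tsum_lt_tsum (i := 0) (fun k => ?_) ?_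
    (summable_pow_succ_mul_sub hsy) (summable_pow_succ_mul_sub hsx)) _
  · exact mul_le_mul_of_nonpos_right (pow_le_pow_left₀ hx hxy.le _) (hd k).le
  · simpa using mul_lt_mul_of_neg_right hxy (hd 0)

theorem diffSeries_le_sum_range (hu : Antitone u) (hx : 0 ≤ x)
    (hs : Summable fun k => x ^ k * u k) (N : ℕ) :
    diffSeries u x ≤ u 0 + ∑ k ∈ Finset.range N, x ^ (k + 1) * (u (k + 1) - u k) := by
  have htail : ∑' k, x ^ (k + N + 1) * (u (k + N + 1) - u (k + N)) ≤ 0 :=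
    tsum_nonpos fun k =>
      mul_nonpos_of_nonneg_of_nonpos (by positivity) (sub_nonpos.mpr (hu (k + N).le_succ))
  rw [diffSeries, ← (summable_pow_succ_mul_sub hs).sum_add_tsum_nat_add N]
  linarith

theorem exists_diffSeries_neg (hu : Antitone u) (hlim : Tendsto u atTop atBot)
    (hs : ∀ x : ℝ, 0 ≤ x → x < 1 → Summable fun k => x ^ k * u k) :
    ∃ x ∈ Ico (0 : ℝ) 1, diffSeries u x < 0 := by
  obtain ⟨N, hN⟩ : ∃ N, u N < 0 := (hlim.eventually (eventually_lt_atBot 0)).exists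
  set p : ℝ → ℝ := fun x => u 0 + ∑ k ∈ Finset.range N, x ^ (k + 1) * (u (k + 1) - u k)
  have hp1 : p 1 = u N := by
    simp only [p, one_pow, one_mul, Finset.sum_range_sub]
    ring
  have hnear : ∀ᶠ x in 𝓝 (1 : ℝ), p x < 0 ∧ 0 < x :=
    (((by fun_prop : Continuous p).tendsto 1).eventually_lt_const (hp1 ▸ hN)).and
      (eventually_gt_nhds one_pos)
  obtain ⟨x, ⟨hpx, hx0⟩, hx1⟩ := ((hnear.filter_mono nhdsWithin_le_nhds).and
    (self_mem_nhdsWithin : Iio (1 : ℝ) ∈ 𝓝[<] 1)).exists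
  refine ⟨x, ⟨hx0.le, hx1⟩, ?_⟩
  exact (diffSeries_le_sum_range hu hx0.le (hs x hx0.le hx1) N).trans_lt hpx

end diffSeries

/-- The function `g x = ∑ x^k u k` has a unique root `Λ̄ ∈ (0,1)`;
`g` is positive before the root and negative after. -/
theorem stmt2 (u : ℕ → ℝ) (hu : StrictAnti u) (hu0 : 0 < u 0)
    (hlim : Filter.Tendsto u Filter.atTop Filter.atBot)
    (hsummable : ∀ x : ℝ, 0 ≤ x → x < 1 → Summable fun k : ℕ => x ^ k * u k) :
    ∃! Λ : ℝ, Λ ∈ Set.Ioo (0 : ℝ) 1 ∧ (∑' k : ℕ, Λ ^ k * u k) = 0 ∧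
      (∀ x : ℝ, 0 ≤ x → x < Λ → 0 < ∑' k : ℕ, x ^ k * u k) ∧
      (∀ x : ℝ, Λ < x → x < 1 → (∑' k : ℕ, x ^ k * u k) < 0) := by
  have hfactor : ∀ x : ℝ, 0 ≤ x → x < 1 →
      (1 - x) * ∑' k, x ^ k * u k = diffSeries u x :=
    fun x hx hx1 => one_sub_mul_tsum_pow_mul (hsummable x hx hx1)
  have hg0 : ∑' k : ℕ, (0 : ℝ) ^ k * u k = u 0 := by
    rw [tsum_eq_single 0 fun k hk => by simp [hk]]
    simp
  refine existsUnique_sign_change (f := fun x => ∑' k : ℕ, x ^ k * u k)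
    ((continuousOn_tsum_pow_mul hsummable).mono (Ico_subset_Ioo_left (by norm_num)))
    (hg0 ▸ hu0) ?_ ?_
  · obtain ⟨x, ⟨hx0, hx1⟩, hHx⟩ := exists_diffSeries_neg hu.antitone hlim hsummable
    rw [← hfactor x hx0 hx1] at hHx
    exact ⟨x, ⟨hx0, hx1⟩, neg_of_mul_neg_right hHx (by linarith)⟩
  · intro x y hx hxy hy1 hgx
    have hx1 : x < 1 := hxy.trans hy1
    have hy : 0 ≤ y := hx.trans hxy.le
    have hH := diffSeries_lt_diffSeries hu hx hxy (hsummable x hx hx1) (hsummable y hy hy1)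
    rw [← hfactor x hx hx1, ← hfactor y hy hy1] at hH
    have hHx : (1 - x) * ∑' k, x ^ k * u k ≤ 0 :=
      mul_nonpos_of_nonneg_of_nonpos (by linarith) hgx
    exact neg_of_mul_neg_right (hH.trans_le hHx) (by linarith)
end

section
/- Let u : ℕ → ℝ be decreasing with u(0) > 0, let m_fi be the least k with u(k) < 0, and let 0 < λ_L < 1. Then Σ_{n=0}^∞ (1 − λ_L) λ_L^n u(n) < (1 − λ_L^{m_fi+1}) · (Σ_{n=0}^{m_fi−1} λ_L^n u(n)) / (Σ_{n=0}^{m_fi} λ_L^n). -/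
open Finset

theorem one_sub_pow_div_geom_sum {K : Type*} [Field K] {r : K} {n : ℕ} (h : r ^ n ≠ 1) :
    (1 - r ^ n) / ∑ i ∈ range n, r ^ i = 1 - r := by
  have hr : r ≠ 1 := by rintro rfl; exact h (one_pow n)
  rw [geom_sum_eq hr, div_div_eq_mul_div, div_eq_iff (sub_ne_zero.mpr h)]
  ring

theorem tsum_lt_sum_range_of_nonpos_tail {f : ℕ → ℝ} {m : ℕ} (hf : Summable f)
    (htail : ∀ n, m ≤ n → f n ≤ 0) (hm : f m < 0) :
    ∑' n, f n < ∑ n ∈ range m, f n := by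
  have htail_neg : ∑' n, f (n + m) < 0 := by
    simpa using Summable.tsum_lt_tsum (i := 0) (fun n => htail (n + m) (Nat.le_add_left m n))
      (by simpa using hm) ((summable_nat_add_iff m).mpr hf) summable_zero
  linarith [hf.sum_add_tsum_nat_add m]

theorem stmt6_general (u : ℕ → ℝ) (lamL : ℝ) (mfi : ℕ)
    (hu : StrictAnti u)
    (hmfi : u mfi < 0)
    (hl0 : 0 < lamL) (hl1 : lamL < 1)
    (hsum : Summable fun n : ℕ => lamL ^ n * u n) :
    ∑' n : ℕ, (1 - lamL) * lamL ^ n * u n <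
      (1 - lamL ^ (mfi + 1)) *
        ((∑ n ∈ Finset.range mfi, lamL ^ n * u n) /
          (∑ n ∈ Finset.range (mfi + 1), lamL ^ n)) := by
  have hpow : lamL ^ (mfi + 1) ≠ 1 := (pow_lt_one₀ hl0.le hl1 mfi.succ_ne_zero).ne
  rw [mul_div_left_comm, one_sub_pow_div_geom_sum hpow, mul_comm]
  simp_rw [mul_assoc, tsum_mul_left]
  refine mul_lt_mul_of_pos_left ?_ (sub_pos.mpr hl1)
  refine tsum_lt_sum_range_of_nonpos_tail hsum (fun n hn => ?_)
    (mul_neg_of_pos_of_neg (pow_pos hl0 _) hmfi)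
  exact mul_nonpos_of_nonneg_of_nonpos (pow_nonneg hl0.le n) ((hu.antitone hn).trans hmfi.le)

/-- the no-information welfare is strictly less than
`(1 - λ_L^{m_fi+1})` times the full-information welfare (homogeneous setting). -/
theorem stmt6 (u : ℕ → ℝ) (lamL : ℝ) (mfi : ℕ)
    (hu : StrictAnti u) (hu0 : 0 < u 0)
    (hmfi : u mfi < 0) (hmfi' : ∀ k < mfi, 0 ≤ u k)
    (hl0 : 0 < lamL) (hl1 : lamL < 1)
    (hsum : Summable fun n : ℕ => lamL ^ n * u n) :
    ∑' n : ℕ, (1 - lamL) * lamL ^ n * u n <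
      (1 - lamL ^ (mfi + 1)) *
        ((∑ n ∈ Finset.range mfi, lamL ^ n * u n) /
          (∑ n ∈ Finset.range (mfi + 1), lamL ^ n)) :=
  stmt6_general u lamL mfi hu hmfi hl0 hl1 hsum
end

section
/- Let 0 < λ_H ≤ λ ≤ 1 with λ_L = λ − λ_H > 0, and suppose Σ_{k=0}^∞ λ_H^k u(k) converges for a strictly decreasing u with u(0) > 0 and u(k) → −∞. For m ∈ ℕ define L(m) = λ_L · (λ^m Σ_{k=0}^∞ λ_H^k u(m+k)) / (Σ_{k=0}^{m} λ^k + λ^m λ_H/(1−λ_H)). Then: if L(m) ≥ 0 then L(m+1) < L(m); and if L(m) < 0 then L(m+1) < 0. Consequently L is strictly decreasing while nonnegative and stays negative thereafter. -/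
/-!
Write `S m = ∑' k, λ_H ^ k u (m + k)` and let `Z m` be the total unnormalised mass of the
threshold-`m` steady state, so that `L m = λ_L (λ ^ m / Z m) S m`. Since `u` is strictly
decreasing, so is `S`; since `Z (m + 1) = λ Z m + 1`, the weight `λ ^ m / Z m` is positive and
nonincreasing. A positive nonincreasing weight times a strictly decreasing sequence decreases
strictly while it is nonnegative, and once negative it stays negative.
-/

open Finset

theorem mul_succ_lt_and_mul_succ_neg {f g : ℕ → ℝ} (hf : StrictAnti f) (hg : Antitone g)
    (hg0 : ∀ m, 0 < g m) (m : ℕ) :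
    (0 ≤ g m * f m → g (m + 1) * f (m + 1) < g m * f m) ∧
      (g m * f m < 0 → g (m + 1) * f (m + 1) < 0) := by
  have hfm : f (m + 1) < f m := hf (Nat.lt_succ_self m)
  have hgm : g (m + 1) ≤ g m := hg (Nat.le_succ m)
  have hg1 := hg0 (m + 1)
  have hgm0 := hg0 m
  constructor
  · intro h
    rcases le_or_gt 0 (f (m + 1)) with hf1 | hf1
    · calc g (m + 1) * f (m + 1) ≤ g m * f (m + 1) := by gcongr
        _ < g m * f m := by gcongr
    · nlinarith
  · intro h
    have hf0 : f m < 0 := neg_of_mul_neg_right h hgm0.le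
    nlinarith

theorem summable_pow_mul_comp_add {r : ℝ} (hr : r ≠ 0) {f : ℕ → ℝ}
    (hf : Summable fun k => r ^ k * f k) (m : ℕ) :
    Summable fun k => r ^ k * f (m + k) := by
  refine (((summable_nat_add_iff m).mpr hf).mul_left (r ^ m)⁻¹).congr fun k => ?_
  rw [pow_add, add_comm k m]
  field_simp

theorem strictAnti_tsum_pow_mul_comp_add {r : ℝ} (hr : 0 < r) {f : ℕ → ℝ} (hf : StrictAnti f)
    (hsum : Summable fun k => r ^ k * f k) :
    StrictAnti fun m => ∑' k, r ^ k * f (m + k) := by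
  refine strictAnti_nat_of_succ_lt fun m => ?_
  have hterm : ∀ k, r ^ k * f (m + 1 + k) < r ^ k * f (m + k) := fun k =>
    mul_lt_mul_of_pos_left (hf (by omega)) (pow_pos hr k)
  exact Summable.tsum_lt_tsum (fun k => (hterm k).le) (hterm 0)
    (summable_pow_mul_comp_add hr.ne' hsum _) (summable_pow_mul_comp_add hr.ne' hsum _)

/-- `∑_{k ≤ m} λ ^ k + λ ^ m ∑_{k ≥ 1} λ_H ^ k`, the total mass of `π_k ∝ λ ^ k` for `k ≤ m`,
`π_{m+k} = λ_H ^ k π_m`. -/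
noncomputable def thresholdMass (lam lamH : ℝ) (m : ℕ) : ℝ :=
  ∑ k ∈ range (m + 1), lam ^ k + lam ^ m * lamH / (1 - lamH)

theorem thresholdMass_succ (lam lamH : ℝ) (m : ℕ) :
    thresholdMass lam lamH (m + 1) = lam * thresholdMass lam lamH m + 1 := by
  rw [thresholdMass, thresholdMass, geom_sum_succ]
  ring

theorem thresholdMass_pos {lam lamH : ℝ} (hl : 0 < lam) (hH0 : 0 ≤ lamH) (hH1 : lamH < 1)
    (m : ℕ) : 0 < thresholdMass lam lamH m := by
  have hgeom : 0 < ∑ k ∈ range (m + 1), lam ^ k :=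
    sum_pos (fun k _ => pow_pos hl k) nonempty_range_add_one
  have htail : 0 ≤ lam ^ m * lamH / (1 - lamH) := by
    have : 0 < 1 - lamH := sub_pos.mpr hH1
    positivity
  exact add_pos_of_pos_of_nonneg hgeom htail

theorem antitone_pow_div_thresholdMass {lam lamH : ℝ} (hl : 0 < lam) (hH0 : 0 ≤ lamH)
    (hH1 : lamH < 1) : Antitone fun m => lam ^ m / thresholdMass lam lamH m := by
  refine antitone_nat_of_succ_le fun m => ?_
  have hZ := thresholdMass_pos hl hH0 hH1 m
  calc lam ^ (m + 1) / thresholdMass lam lamH (m + 1)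
      ≤ lam ^ (m + 1) / (lam * thresholdMass lam lamH m) := by
        rw [thresholdMass_succ]
        gcongr
        linarith
    _ = lam ^ m / thresholdMass lam lamH m := by
        rw [pow_succ', mul_div_mul_left _ _ hl.ne']

theorem stmt9_general (u : ℕ → ℝ) (lam lamH lamL : ℝ) (L : ℕ → ℝ)
    (hH0 : 0 < lamH) (hl1 : lam ≤ 1)
    (hlamL : lamL = lam - lamH) (hL0 : 0 < lamL)
    (hu : StrictAnti u)
    (hsum : Summable fun k : ℕ => lamH ^ k * u k)
    (hLdef : ∀ m : ℕ, L m = lamL * (lam ^ m * ∑' k : ℕ, lamH ^ k * u (m + k)) /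
        (∑ k ∈ Finset.range (m + 1), lam ^ k + lam ^ m * lamH / (1 - lamH))) :
    ∀ m : ℕ, (0 ≤ L m → L (m + 1) < L m) ∧ (L m < 0 → L (m + 1) < 0) := by
  have hl : 0 < lam := by linarith
  have hH1 : lamH < 1 := by linarith
  set g : ℕ → ℝ := fun m => lamL * (lam ^ m / thresholdMass lam lamH m)
  have hg : Antitone g := fun _ _ h =>
    mul_le_mul_of_nonneg_left (antitone_pow_div_thresholdMass hl hH0.le hH1 h) hL0.le
  have hg0 : ∀ m, 0 < g m := fun m =>
    mul_pos hL0 (div_pos (pow_pos hl m) (thresholdMass_pos hl hH0.le hH1 m))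
  have hL : L = fun m => g m * ∑' k, lamH ^ k * u (m + k) := by
    funext m
    rw [hLdef m]
    simp only [g, thresholdMass]
    ring
  subst hL
  exact mul_succ_lt_and_mul_succ_neg (strictAnti_tsum_pow_mul_comp_add hH0 hu hsum) hg hg0

/-- the LEAVE functional `L(m)` over integer thresholds is strictly
decreasing while nonnegative, and stays negative thereafter. -/
theorem stmt9 (u : ℕ → ℝ) (lam lamH lamL : ℝ) (L : ℕ → ℝ)
    (hH0 : 0 < lamH) (hHl : lamH ≤ lam) (hl1 : lam ≤ 1)
    (hlamL : lamL = lam - lamH) (hL0 : 0 < lamL)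
    (hu : StrictAnti u) (hu0 : 0 < u 0)
    (hlim : Filter.Tendsto u Filter.atTop Filter.atBot)
    (hsum : Summable fun k : ℕ => lamH ^ k * u k)
    (hLdef : ∀ m : ℕ, L m = lamL * (lam ^ m * ∑' k : ℕ, lamH ^ k * u (m + k)) /
        (∑ k ∈ Finset.range (m + 1), lam ^ k + lam ^ m * lamH / (1 - lamH))) :
    ∀ m : ℕ, (0 ≤ L m → L (m + 1) < L m) ∧ (L m < 0 → L (m + 1) < 0) :=
  stmt9_general u lam lamH lamL L hH0 hl1 hlamL hL0 hu hsum hLdef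
end

section
/- With Γ, Λ, Φ as in the unimodality setup (Γ(m) = 1/(Σ_{k≤m} λ^k + λ^m λ_H/(1−λ_H)), Λ(m) = Σ_{k<m} λ^k u(k), Φ = ΓΛ), the finite differences satisfy: Γ(m) − Γ(m−1) = −λ^{m−1} ((λ−λ_H)/(1−λ_H)) Γ(m)Γ(m−1), and Φ(m) − Φ(m−1) = λ^{m−1} Γ(m−1) (u(m−1) − ((λ−λ_H)/(1−λ_H)) Φ(m)). -/
/-!
The denominator `D m` of `Γ m` satisfies `D (m + 1) = D m + λ^m (λ - λ_H) / (1 - λ_H)` and stays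
`≥ 1`, so the identity for `Γ` is `1/(a + d) - 1/a = -d/(a (a + d))`. The identity for `Φ` is then
the discrete product rule for `Γ Λ`, using `Λ (m + 1) = Λ m + λ^m u m`.
-/

open Finset

noncomputable def gammaDenom (lam lamH : ℝ) (m : ℕ) : ℝ :=
  ∑ k ∈ range (m + 1), lam ^ k + lam ^ m * lamH / (1 - lamH)

lemma gammaDenom_pos {lam lamH : ℝ} (hl0 : 0 ≤ lam) (hH0 : 0 ≤ lamH) (hH1 : lamH < 1) (m : ℕ) :
    0 < gammaDenom lam lamH m := by
  have hsum : 1 ≤ ∑ k ∈ range (m + 1), lam ^ k := by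
    rw [sum_range_succ', pow_zero, le_add_iff_nonneg_left]
    positivity
  have htail : 0 ≤ lam ^ m * lamH / (1 - lamH) :=
    div_nonneg (by positivity) (sub_nonneg.2 hH1.le)
  unfold gammaDenom
  linarith

lemma gammaDenom_succ {lam lamH : ℝ} (hH1 : lamH ≠ 1) (m : ℕ) :
    gammaDenom lam lamH (m + 1) =
      gammaDenom lam lamH m + lam ^ m * ((lam - lamH) / (1 - lamH)) := by
  have : 1 - lamH ≠ 0 := sub_ne_zero.2 hH1.symm
  simp only [gammaDenom, sum_range_succ]
  field_simp
  ring

lemma one_div_add_sub_one_div {K : Type*} [Field K] {a d : K} (ha : a ≠ 0) (had : a + d ≠ 0) :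
    1 / (a + d) - 1 / a = -d * (1 / (a + d) * (1 / a)) := by
  field_simp
  ring

/-- Discrete product rule for `Φ = Γ * Λ` when `Γ` obeys the difference law of a reciprocal. -/
lemma mul_sub_mul_of_sub_eq {R : Type*} [CommRing R] {g g' l l' a c : R}
    (hg : g' - g = -c * (g' * g)) (hl : l' = l + a) :
    g' * l' - g * l = g * (a - c * (g' * l')) := by
  subst hl
  linear_combination (l + a) * hg

theorem stmt11_general (u : ℕ → ℝ) (lam lamH : ℝ)
    (hH0 : 0 ≤ lamH) (hH1 : lamH < 1) (hHl : lamH ≤ lam)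
    (Γ Λf Φ : ℕ → ℝ)
    (hΓ : ∀ m, Γ m = 1 / (∑ k ∈ Finset.range (m + 1), lam ^ k + lam ^ m * lamH / (1 - lamH)))
    (hΛ : ∀ m, Λf m = ∑ k ∈ Finset.range m, lam ^ k * u k)
    (hΦ : ∀ m, Φ m = Γ m * Λf m) :
    ∀ m : ℕ,
      Γ (m + 1) - Γ m = -lam ^ m * ((lam - lamH) / (1 - lamH)) * (Γ (m + 1) * Γ m) ∧
      Φ (m + 1) - Φ m = lam ^ m * Γ m * (u m - ((lam - lamH) / (1 - lamH)) * Φ (m + 1)) := by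
  intro m
  have hΓD : ∀ m, Γ m = 1 / gammaDenom lam lamH m := hΓ
  have hD : ∀ m, gammaDenom lam lamH m ≠ 0 :=
    fun m => (gammaDenom_pos (hH0.trans hHl) hH0 hH1 m).ne'
  have hΓdiff : Γ (m + 1) - Γ m = -lam ^ m * ((lam - lamH) / (1 - lamH)) * (Γ (m + 1) * Γ m) := by
    have := one_div_add_sub_one_div (hD m) (gammaDenom_succ hH1.ne m ▸ hD (m + 1))
    rw [hΓD, hΓD, gammaDenom_succ hH1.ne, this]
    ring
  have hΛsucc : Λf (m + 1) = Λf m + lam ^ m * u m := by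
    rw [hΛ, hΛ, sum_range_succ]
  refine ⟨hΓdiff, ?_⟩
  rw [hΦ, hΦ, mul_sub_mul_of_sub_eq (c := lam ^ m * ((lam - lamH) / (1 - lamH)))
    (by rw [hΓdiff]; ring) hΛsucc]
  ring

/-- finite-difference identities for `Γ` and `Φ = Γ * Λ`. -/
theorem stmt11 (u : ℕ → ℝ) (lam lamH : ℝ)
    (hH0 : 0 ≤ lamH) (hH1 : lamH < 1) (hHl : lamH ≤ lam) (hl1 : lam ≤ 1)
    (Γ Λf Φ : ℕ → ℝ)
    (hΓ : ∀ m, Γ m = 1 / (∑ k ∈ Finset.range (m + 1), lam ^ k + lam ^ m * lamH / (1 - lamH)))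
    (hΛ : ∀ m, Λf m = ∑ k ∈ Finset.range m, lam ^ k * u k)
    (hΦ : ∀ m, Φ m = Γ m * Λf m) :
    ∀ m : ℕ,
      Γ (m + 1) - Γ m = -lam ^ m * ((lam - lamH) / (1 - lamH)) * (Γ (m + 1) * Γ m) ∧
      Φ (m + 1) - Φ m = lam ^ m * Γ m * (u m - ((lam - lamH) / (1 - lamH)) * Φ (m + 1)) :=
  stmt11_general u lam lamH hH0 hH1 hHl Γ Λf Φ hΓ hΛ hΦ
end

section
/- Suppose Λ̄ ∈ (0,1) satisfies Σ_{k=0}^∞ Λ̄^k u(k) = 0 for a strictly decreasing u with u(0) > 0 and lim u(k) = −∞. Then for every λ_H ∈ [Λ̄, 1), Σ_{k=0}^∞ (1 − λ_H) λ_H^k u(k) ≤ 0; i.e., a low-need user weakly prefers the outside option (of value 0) to joining when the queue is M/M/1 with arrival rate λ_H. -/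
/-! Abel summation: with `v k = u k - u (k + 1) ≥ 0`, one has
`u 0 - (1 - x) * ∑ xᵏ u k = ∑ xᵏ⁺¹ v k`, which is nondecreasing in `x ≥ 0`. At `x = Λ̄` the
left side is `u 0`, so for `λ_H ≥ Λ̄` it is at least `u 0`, i.e. `(1 - λ_H) ∑ λ_Hᵏ u k ≤ 0`. -/

theorem hasSum_pow_succ_mul_sub_succ {u : ℕ → ℝ} {x : ℝ}
    (hs : Summable fun k : ℕ => x ^ k * u k) :
    HasSum (fun k : ℕ => x ^ (k + 1) * (u k - u (k + 1)))
      (u 0 - (1 - x) * ∑' k : ℕ, x ^ k * u k) := by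
  have h := (hs.hasSum.mul_left x).sub ((hasSum_nat_add_iff' 1).mpr hs.hasSum)
  rw [Finset.sum_range_one, pow_zero, one_mul] at h
  convert h using 1
  · rfl
  · ext k; ring
  · ring

theorem Antitone.one_sub_mul_tsum_pow_mul_le {u : ℕ → ℝ} (hu : Antitone u) {x y : ℝ}
    (hx : Summable fun k : ℕ => x ^ k * u k) (hy : Summable fun k : ℕ => y ^ k * u k)
    (hx0 : 0 ≤ x) (hxy : x ≤ y) :
    (1 - y) * ∑' k : ℕ, y ^ k * u k ≤ (1 - x) * ∑' k : ℕ, x ^ k * u k := by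
  have := hasSum_le
    (fun k => mul_le_mul_of_nonneg_right (pow_le_pow_left₀ hx0 hxy _)
      (sub_nonneg.2 (hu k.le_succ)))
    (hasSum_pow_succ_mul_sub_succ hx) (hasSum_pow_succ_mul_sub_succ hy)
  linarith

theorem stmt13_general (u : ℕ → ℝ) (Λ : ℝ)
    (hu : StrictAnti u)
    (hsummable : ∀ x : ℝ, 0 ≤ x → x < 1 → Summable fun k : ℕ => x ^ k * u k)
    (hΛ : Λ ∈ Set.Ioo (0 : ℝ) 1) (hroot : ∑' k : ℕ, Λ ^ k * u k = 0) :
    ∀ lamH : ℝ, Λ ≤ lamH → lamH < 1 →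
      (∑' k : ℕ, (1 - lamH) * lamH ^ k * u k) ≤ 0 := by
  intro lamH hle hlt
  have hΛ0 : 0 ≤ Λ := hΛ.1.le
  calc ∑' k : ℕ, (1 - lamH) * lamH ^ k * u k = (1 - lamH) * ∑' k : ℕ, lamH ^ k * u k := by
        simp only [mul_assoc, tsum_mul_left]
    _ ≤ (1 - Λ) * ∑' k : ℕ, Λ ^ k * u k :=
        hu.antitone.one_sub_mul_tsum_pow_mul_le (hsummable Λ hΛ0 hΛ.2)
          (hsummable lamH (hΛ0.trans hle) hlt) hΛ0 hle
    _ = 0 := by rw [hroot, mul_zero]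

/-- for `λ_H ≥ Λ̄`, the expected joining utility of a low-need user
under the geometric `M/M/1` distribution with rate `λ_H` is nonpositive. -/
theorem stmt13 (u : ℕ → ℝ) (Λ : ℝ)
    (hu : StrictAnti u) (hu0 : 0 < u 0)
    (hlim : Filter.Tendsto u Filter.atTop Filter.atBot)
    (hsummable : ∀ x : ℝ, 0 ≤ x → x < 1 → Summable fun k : ℕ => x ^ k * u k)
    (hΛ : Λ ∈ Set.Ioo (0 : ℝ) 1) (hroot : ∑' k : ℕ, Λ ^ k * u k = 0) :
    ∀ lamH : ℝ, Λ ≤ lamH → lamH < 1 →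
      (∑' k : ℕ, (1 - lamH) * lamH ^ k * u k) ≤ 0 :=
  stmt13_general u Λ hu hsummable hΛ hroot
end

section
/- Let λ_H ∈ (0,1), λ = λ_L + λ_H ≤ 1 with λ_L > 0, and fix a threshold x = m + a with m ∈ ℕ, a ∈ [0,1). With the threshold steady state (π_k ∝ λ^k for k ≤ m, π_{m+1} = (λ_H + aλ_L)π_m, ratio λ_H beyond), the LEAVE functional equals L(x) = λ_L · [λ^m (1−a) u(m) + λ^m (λ_H + λ_L a) Σ_{k=1}^∞ λ_H^{k−1} u(m+k)] / [Σ_{k=0}^m λ^k + λ^m (λ_H + aλ_L)/(1−λ_H)], and for fixed m this expression is monotone in a ∈ [0,1) (being a ratio of two affine functions of a with positive denominator). -/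
/-!
Solving the balance equations of the threshold steady state gives `π k = λ^k π₀` for `k ≤ m` and
`π (m + 1 + k) = λ_H^k (λ_H + a λ_L) λ^m π₀`. In `L(π)` every term below `m` cancels, the term
at `m` leaves `λ_L (1 - a) λ^m π₀ u(m)`, and beyond `m` each coefficient `λ π_n - π_{n+1}` equals
`λ_L π_n`, so `L(π) = π₀ · N(a)`, while `Σ π = 1` gives `π₀ · D(a) = 1`. Both `N` and `D` are
affine in `a` and `D > 0`, hence `a ↦ N(a) / D(a)` is monotone or antitone.
-/

open Finset

theorem monotoneOn_or_antitoneOn_div_affine {𝕜 : Type*} [Field 𝕜] [LinearOrder 𝕜]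
    [IsStrictOrderedRing 𝕜] {s : Set 𝕜} (α β γ δ : 𝕜) (hpos : ∀ x ∈ s, 0 < γ + δ * x) :
    MonotoneOn (fun x => (α + β * x) / (γ + δ * x)) s ∨
      AntitoneOn (fun x => (α + β * x) / (γ + δ * x)) s := by
  -- the sign of `β γ - α δ` is the sign of the derivative
  rcases le_or_gt 0 (β * γ - α * δ) with h | h
  · left
    intro x hx y hy hxy
    rw [div_le_div_iff₀ (hpos x hx) (hpos y hy)]
    nlinarith [mul_nonneg h (sub_nonneg.mpr hxy)]
  · right
    intro x hx y hy hxy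
    rw [div_le_div_iff₀ (hpos y hy) (hpos x hx)]
    nlinarith [mul_nonneg (neg_pos.mpr h).le (sub_nonneg.mpr hxy)]

theorem eq_pow_mul_of_succ_eq_mul {M : Type*} [Monoid M] {f : ℕ → M} {r : M} {N : ℕ}
    (h : ∀ k < N, f (k + 1) = r * f k) {k : ℕ} (hk : k ≤ N) : f k = r ^ k * f 0 := by
  induction k with
  | zero => simp
  | succ k ih => rw [h k hk, ih (Nat.le_of_succ_le hk), pow_succ', mul_assoc]

theorem add_eq_pow_mul_of_succ_eq_mul {M : Type*} [Monoid M] {f : ℕ → M} {r : M} {N : ℕ}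
    (h : ∀ n, N ≤ n → f (n + 1) = r * f n) (k : ℕ) : f (k + N) = r ^ k * f N := by
  induction k with
  | zero => simp
  | succ k ih => rw [Nat.add_right_comm, h _ (Nat.le_add_left N k), ih, pow_succ', mul_assoc]

theorem tsum_eq_sum_range_add_mul_tsum {R : Type*} [NonUnitalNonAssocSemiring R]
    [TopologicalSpace R] [IsTopologicalSemiring R] [T2Space R] {f g : ℕ → R} {c : R} {m : ℕ}
    (hg : Summable g) (h : ∀ k, f (k + m) = c * g k) :
    ∑' n, f n = ∑ n ∈ range m, f n + c * ∑' k, g k := by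
  have hf : Summable fun k => f (k + m) := (hg.mul_left c).congr fun k => (h k).symm
  rw [← hf.sum_add_tsum_nat_add', tsum_congr h, hg.tsum_mul_left]

section ThresholdSteadyState

variable {π : ℕ → ℝ} {lam lamH q : ℝ} {m : ℕ}

theorem tsum_threshold (h1 : ∀ k < m, π (k + 1) = lam * π k) (h2 : π (m + 1) = q * π m)
    (h3 : ∀ k, m < k → π (k + 1) = lamH * π k) (hH0 : 0 ≤ lamH) (hH1 : lamH < 1) :
    ∑' n, π n = π 0 * (∑ k ∈ range (m + 1), lam ^ k + lam ^ m * q / (1 - lamH)) := by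
  have hhead : ∑ n ∈ range (m + 1), π n = π 0 * ∑ k ∈ range (m + 1), lam ^ k := by
    rw [mul_sum]
    refine sum_congr rfl fun k hk => ?_
    rw [eq_pow_mul_of_succ_eq_mul h1 (Nat.lt_succ_iff.mp (mem_range.mp hk)), mul_comm]
  have htail : ∀ k, π (k + (m + 1)) = π (m + 1) * lamH ^ k := fun k => by
    rw [add_eq_pow_mul_of_succ_eq_mul h3, mul_comm]
  rw [tsum_eq_sum_range_add_mul_tsum (summable_geometric_of_lt_one hH0 hH1) htail,
    tsum_geometric_of_lt_one hH0 hH1, hhead, h2, eq_pow_mul_of_succ_eq_mul h1 le_rfl]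
  ring

theorem tsum_leave_threshold (u : ℕ → ℝ) (h1 : ∀ k < m, π (k + 1) = lam * π k)
    (h2 : π (m + 1) = q * π m) (h3 : ∀ k, m < k → π (k + 1) = lamH * π k)
    (hsum : Summable fun k : ℕ => lamH ^ k * u (m + 1 + k)) :
    ∑' n, (lam * π n - π (n + 1)) * u n =
      π 0 * (lam ^ m * ((lam - q) * u m +
        q * (lam - lamH) * ∑' k : ℕ, lamH ^ k * u (m + 1 + k))) := by
  have hπm : π m = lam ^ m * π 0 := eq_pow_mul_of_succ_eq_mul h1 le_rfl
  have htail : ∀ k, (lam * π (k + (m + 1)) - π (k + (m + 1) + 1)) * u (k + (m + 1)) =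
      (lam - lamH) * π (m + 1) * (lamH ^ k * u (m + 1 + k)) := fun k => by
    rw [h3 _ (by omega), add_eq_pow_mul_of_succ_eq_mul h3, add_comm k]
    ring
  have hhead : ∑ n ∈ range (m + 1), (lam * π n - π (n + 1)) * u n = (lam - q) * π m * u m := by
    rw [sum_range_succ, sum_eq_zero fun k hk => by rw [h1 k (mem_range.mp hk)]; ring, h2]
    ring
  rw [tsum_eq_sum_range_add_mul_tsum hsum htail, hhead, h2, hπm]
  ring

end ThresholdSteadyState

theorem stmt16_general (u : ℕ → ℝ) (lam lamL lamH : ℝ) (m : ℕ) (a : ℝ) (π : ℕ → ℝ)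
    (hH0 : 0 < lamH) (hH1 : lamH < 1) (hL0 : 0 < lamL)
    (hlam : lam = lamL + lamH)
    (hsum : Summable fun k : ℕ => lamH ^ k * u (m + 1 + k))
    (ha : 0 ≤ a) (hπ1 : ∑' n, π n = 1)
    (h1 : ∀ k < m, π (k + 1) = lam * π k)
    (h2 : π (m + 1) = (lamH + a * lamL) * π m)
    (h3 : ∀ k, m < k → π (k + 1) = lamH * π k) :
    (∑' n, (lam * π n - π (n + 1)) * u n) =
        lamL * (lam ^ m * (1 - a) * u m +
            lam ^ m * (lamH + lamL * a) * ∑' k : ℕ, lamH ^ k * u (m + 1 + k)) /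
          (∑ k ∈ Finset.range (m + 1), lam ^ k + lam ^ m * (lamH + a * lamL) / (1 - lamH)) ∧
      (MonotoneOn (fun b : ℝ =>
            lamL * (lam ^ m * (1 - b) * u m +
                lam ^ m * (lamH + lamL * b) * ∑' k : ℕ, lamH ^ k * u (m + 1 + k)) /
              (∑ k ∈ Finset.range (m + 1), lam ^ k + lam ^ m * (lamH + b * lamL) / (1 - lamH)))
          (Set.Ico (0 : ℝ) 1) ∨
        AntitoneOn (fun b : ℝ =>
            lamL * (lam ^ m * (1 - b) * u m +
                lam ^ m * (lamH + lamL * b) * ∑' k : ℕ, lamH ^ k * u (m + 1 + k)) /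
              (∑ k ∈ Finset.range (m + 1), lam ^ k + lam ^ m * (lamH + b * lamL) / (1 - lamH)))
          (Set.Ico (0 : ℝ) 1)) := by
  set S := ∑ k ∈ range (m + 1), lam ^ k
  set T := ∑' k : ℕ, lamH ^ k * u (m + 1 + k)
  have hlam0 : 0 ≤ lam := by linarith
  have hden : ∀ b : ℝ, 0 ≤ b → 0 < S + lam ^ m * (lamH + b * lamL) / (1 - lamH) := fun b hb =>
    add_pos_of_pos_of_nonneg (geom_sum_pos hlam0 m.succ_ne_zero) (div_nonneg
      (mul_nonneg (pow_nonneg hlam0 m) (by positivity)) (sub_nonneg.mpr hH1.le))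
  have hnorm : π 0 * (S + lam ^ m * (lamH + a * lamL) / (1 - lamH)) = 1 :=
    (tsum_threshold h1 h2 h3 hH0.le hH1).symm.trans hπ1
  refine ⟨?_, ?_⟩
  · rw [tsum_leave_threshold u h1 h2 h3 hsum, eq_div_iff (hden a ha).ne', mul_right_comm, hnorm,
      hlam]
    ring
  · set γ := S + lam ^ m * lamH / (1 - lamH)
    set δ := lam ^ m * lamL / (1 - lamH)
    have hden_affine : ∀ b : ℝ, S + lam ^ m * (lamH + b * lamL) / (1 - lamH) = γ + δ * b :=
      fun b => by ring
    have hratio : ∀ b : ℝ,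
        (lamL * lam ^ m * (u m + lamH * T) + lamL * lam ^ m * (lamL * T - u m) * b) / (γ + δ * b) =
          lamL * (lam ^ m * (1 - b) * u m + lam ^ m * (lamH + lamL * b) * T) /
            (S + lam ^ m * (lamH + b * lamL) / (1 - lamH)) :=
      fun b => by rw [hden_affine]; ring
    exact (monotoneOn_or_antitoneOn_div_affine _ _ _ _ fun b hb => hden_affine b ▸ hden b hb.1).imp
      (·.congr fun b _ => hratio b) (·.congr fun b _ => hratio b)

/-- closed form of the LEAVE functional at a threshold `x = m + a`
steady state, and its monotonicity in `a` on `[0,1)`. -/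
theorem stmt16 (u : ℕ → ℝ) (lam lamL lamH : ℝ) (m : ℕ) (a : ℝ) (π : ℕ → ℝ)
    (hH0 : 0 < lamH) (hH1 : lamH < 1) (hL0 : 0 < lamL)
    (hlam : lam = lamL + lamH) (hl1 : lam ≤ 1)
    (hu : StrictAnti u)
    (hsum : Summable fun k : ℕ => lamH ^ k * u (m + 1 + k))
    (ha : 0 ≤ a) (ha1 : a < 1)
    (hπ0 : ∀ n, 0 ≤ π n) (hπ1 : ∑' n, π n = 1)
    (h1 : ∀ k < m, π (k + 1) = lam * π k)
    (h2 : π (m + 1) = (lamH + a * lamL) * π m)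
    (h3 : ∀ k, m < k → π (k + 1) = lamH * π k) :
    (∑' n, (lam * π n - π (n + 1)) * u n) =
        lamL * (lam ^ m * (1 - a) * u m +
            lam ^ m * (lamH + lamL * a) * ∑' k : ℕ, lamH ^ k * u (m + 1 + k)) /
          (∑ k ∈ Finset.range (m + 1), lam ^ k + lam ^ m * (lamH + a * lamL) / (1 - lamH)) ∧
      (MonotoneOn (fun b : ℝ =>
            lamL * (lam ^ m * (1 - b) * u m +
                lam ^ m * (lamH + lamL * b) * ∑' k : ℕ, lamH ^ k * u (m + 1 + k)) /
              (∑ k ∈ Finset.range (m + 1), lam ^ k + lam ^ m * (lamH + b * lamL) / (1 - lamH)))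
          (Set.Ico (0 : ℝ) 1) ∨
        AntitoneOn (fun b : ℝ =>
            lamL * (lam ^ m * (1 - b) * u m +
                lam ^ m * (lamH + lamL * b) * ∑' k : ℕ, lamH ^ k * u (m + 1 + k)) /
              (∑ k ∈ Finset.range (m + 1), lam ^ k + lam ^ m * (lamH + b * lamL) / (1 - lamH)))
          (Set.Ico (0 : ℝ) 1)) :=
  stmt16_general u lam lamL lamH m a π hH0 hH1 hL0 hlam hsum ha hπ1 h1 h2 h3
end
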